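/- (a) For each z ∈ S_n there exists a unique element B_z ∈ H^{ε_z} of the form B_z = T_z + Σ_{y ≺ z} b_{yz} T_y with b_{yz} ∈ R, where the sum is over y ≺ z (i.e. y < z in the Bruhat order and ℓ(y) ≢ ℓ(z) mod 2). (b) {B_z : z ∈ A_n} is an R-basis of A_n(q) = H^+. (c) {B_z : z ∈ S_n ∖ A_n} is an R-basis of H^−. -/

import Mathlib

open scoped Classical

noncomputable section

/-- The simple transposition swapping `i` and `i+1` (0-indexed; this is the Coxeter
generator `s_{i+1}` in 1-indexed notation) in the symmetric group on `Fin n`. -/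
def sTr (n i : ℕ) : Equiv.Perm (Fin n) :=
  if h : i + 1 < n then Equiv.swap ⟨i, Nat.lt_of_succ_lt h⟩ ⟨i + 1, h⟩ else 1

/-- The Coxeter length: the minimal length of an expression of `w` as a product of
simple transpositions. -/
def len (n : ℕ) (w : Equiv.Perm (Fin n)) : ℕ :=
  sInf {k | ∃ l : List ℕ, l.length = k ∧ (∀ i ∈ l, i + 1 < n) ∧ w = (l.map (sTr n)).prod}

/-- The (strict) Bruhat order on the symmetric group: `y < z` iff `z` can be obtained
from `y` by successively multiplying by reflections, increasing the length at each step. -/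
def bruhatLT (n : ℕ) (y z : Equiv.Perm (Fin n)) : Prop :=
  Relation.TransGen
    (fun a b => (∃ u v : Fin n, u ≠ v ∧ b = a * Equiv.swap u v) ∧ len n a < len n b) y z

/-- `y ≺ z` iff `y < z` in the Bruhat order and `ℓ(y) ≢ ℓ(z) (mod 2)`. -/
def precLT (n : ℕ) (y z : Equiv.Perm (Fin n)) : Prop :=
  bruhatLT n y z ∧ ¬ (len n y % 2 = len n z % 2)

/-- The element `A_z = ½(T_z + ε_z T_z^#)`. -/
def Aelt {R H : Type*} [CommRing R] [Ring H] [Algebra R H] (n : ℕ)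
    (T : Equiv.Perm (Fin n) → H) (hash : H ≃ₐ[R] H) (z : Equiv.Perm (Fin n)) : H :=
  Ring.inverse (2 : R) • (T z + ((-1 : R) ^ len n z) • hash (T z))

/-- The `ε`-eigenspace `H^ε = {h ∈ H : h^# = ε h}` of an algebra automorphism,
viewed as an `R`-submodule. -/
def fixedSubmodule {R H : Type*} [CommRing R] [Ring H] [Algebra R H]
    (φ : H ≃ₐ[R] H) (ε : R) : Submodule R H where
  carrier := {x | φ x = ε • x}
  add_mem' := by
    intro a b ha hb
    simp only [Set.mem_setOf_eq] at *
    rw [map_add, ha, hb, smul_add]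
  zero_mem' := by simp
  smul_mem' := by
    intro c a ha
    simp only [Set.mem_setOf_eq] at *
    rw [map_smul, ha, smul_smul, smul_smul, mul_comm]

/-!
The hash involution is triangular in the standard basis: `T_w^# ≡ ε_w T_w` modulo the span of
the `T_y` with `y < w` in the Bruhat order. This follows by induction on `ℓ(w)` from
`T_{ws} = T_w T_s` (when `ws > w`), `T_s^# = (q - q⁻¹) - T_s` and the lifting property of the
Bruhat order (`y < w < ws` implies `ys < ws`), which is checked on permutations through the
description of `ℓ` as the number of inversions.

For a triangular involution with diagonal `±1`, the element `½ (T_z + ε_z T_z^#)` is an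
`ε_z`-eigenvector with leading term `T_z`, and subtracting by induction the `B_y` with `y < z` of
the parity of `z` leaves only lower terms of the other parity; this gives `B_z`. Comparing leading
coefficients shows that an `ε_z`-eigenvector supported on elements of the other parity vanishes,
whence uniqueness. Finally the unitriangular family `(B_z)` spans `H`, so it is a basis (a
surjective endomorphism of a finite free module over a commutative ring is injective), and since
`B_z^# = ε_z B_z` and `2` is invertible, its even and odd parts span the two eigenspaces.
-/

open Equiv Finset Submodule

/-! ### Length and inversions -/

namespace Equiv.Perm

variable {n : ℕ}

def inversions (w : Perm (Fin n)) : Finset (Fin n × Fin n) :=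
  univ.filter fun p => p.1 < p.2 ∧ w p.2 < w p.1

def invCount (w : Perm (Fin n)) : ℕ := #(inversions w)

lemma mem_inversions {w : Perm (Fin n)} {p : Fin n × Fin n} :
    p ∈ inversions w ↔ p.1 < p.2 ∧ w p.2 < w p.1 := by
  simp [inversions]

def swapPair (a b : Fin n) (p : Fin n × Fin n) : Fin n × Fin n :=
  if swap a b p.1 < swap a b p.2 then (swap a b p.1, swap a b p.2) else p

lemma swapPair_swapPair {a b : Fin n} {p : Fin n × Fin n} (hp : p.1 < p.2) :
    swapPair a b (swapPair a b p) = p := by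
  unfold swapPair
  split_ifs <;> simp_all

lemma injOn_swapPair (a b : Fin n) : Set.InjOn (swapPair a b) {p | p.1 < p.2} :=
  fun p hp p' hp' h => by
    rw [← swapPair_swapPair (a := a) (b := b) hp, h, swapPair_swapPair hp']

lemma fst_eq_or_snd_eq_of_not_swap_lt {a b : Fin n} (hab : a < b) {p : Fin n × Fin n}
    (hp : p.1 < p.2) (h : ¬ swap a b p.1 < swap a b p.2) :
    (p.1 = a ∧ p.2 ≤ b) ∨ (p.2 = b ∧ a ≤ p.1) := by
  obtain ⟨c, d⟩ := p
  simp only [swap_apply_def] at h ⊢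
  simp only [Fin.lt_def, Fin.le_def, Fin.ext_iff] at *
  split_ifs at h <;> omega

lemma invCount_add_one_le_mul_swap {w : Perm (Fin n)} {a b : Fin n} (hab : a < b)
    (hw : w a < w b) : invCount w + 1 ≤ invCount (w * swap a b) := by
  have hab_mem : (a, b) ∈ inversions (w * swap a b) := by
    simp [mem_inversions, hab, hw]
  have hmaps : Set.MapsTo (swapPair a b) (inversions w)
      ((inversions (w * swap a b)).erase (a, b)) := by
    intro p hp
    rw [mem_coe, mem_inversions] at hp
    rw [mem_coe, mem_erase, mem_inversions]
    unfold swapPair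
    split_ifs with h
    · refine ⟨fun he => ?_, h, by simpa using hp.2⟩
      simp only [Prod.mk.injEq, swap_apply_eq_iff, swap_apply_left, swap_apply_right] at he
      exact absurd (he.1 ▸ he.2 ▸ hp.1) (not_lt.2 hab.le)
    · rcases fst_eq_or_snd_eq_of_not_swap_lt hab hp.1 h with ⟨h1, h2⟩ | ⟨h1, h2⟩
      · obtain ⟨c, d⟩ := p
        obtain rfl : c = a := h1
        have hdb : d ≠ b := by rintro rfl; exact absurd hw (not_lt.2 hp.2.le)
        refine ⟨by simp [hdb], hp.1, ?_⟩
        simpa [swap_apply_of_ne_of_ne hp.1.ne' hdb] using hp.2.trans hw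
      · obtain ⟨c, d⟩ := p
        obtain rfl : d = b := h1
        have hca : c ≠ a := by rintro rfl; exact absurd hw (not_lt.2 hp.2.le)
        refine ⟨by simp [hca], hp.1, ?_⟩
        simpa [swap_apply_of_ne_of_ne hca hp.1.ne] using hw.trans hp.2
  have := card_le_card_of_injOn _ hmaps ((injOn_swapPair a b).mono fun p hp =>
    (mem_inversions.1 hp).1)
  rw [card_erase_of_mem hab_mem] at this
  have := card_pos.2 ⟨_, hab_mem⟩
  unfold invCount
  omega

lemma invCount_mul_swap_le_add_one {w : Perm (Fin n)} {a b : Fin n} (hab : a < b)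
    (hadj : (b : ℕ) = a + 1) : invCount (w * swap a b) ≤ invCount w + 1 := by
  have hmaps : Set.MapsTo (swapPair a b) ((inversions (w * swap a b)).erase (a, b))
      (inversions w) := by
    intro p hp
    rw [mem_coe, mem_erase, mem_inversions] at hp
    rw [mem_coe, mem_inversions]
    unfold swapPair
    split_ifs with h
    · simpa using ⟨h, hp.2.2⟩
    · obtain ⟨c, d⟩ := p
      have := fst_eq_or_snd_eq_of_not_swap_lt hab hp.2.1 h
      simp only [Prod.mk.injEq, ne_eq, Fin.lt_def, Fin.le_def, Fin.ext_iff] at this hp hadj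
      omega
  have := card_le_card_of_injOn _ hmaps ((injOn_swapPair a b).mono fun p hp =>
    (mem_inversions.1 (mem_of_mem_erase hp)).1)
  have := pred_card_le_card_erase (s := inversions (w * swap a b)) (a := (a, b))
  unfold invCount
  omega

lemma exists_descent {w : Perm (Fin n)} (hw : w ≠ 1) :
    ∃ i, ∃ h : i + 1 < n, w ⟨i + 1, h⟩ < w ⟨i, by omega⟩ := by
  contrapose! hw
  obtain _ | m := n
  · exact Subsingleton.elim _ _
  have hmono : StrictMono w := Fin.strictMono_iff_lt_succ.2 fun i =>
    (hw i (by omega)).lt_of_ne (w.injective.ne (by simp [Fin.ext_iff]))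
  ext x
  simp [hmono.eq_id]

lemma sTr_eq {i : ℕ} (h : i + 1 < n) : sTr n i = swap ⟨i, by omega⟩ ⟨i + 1, h⟩ :=
  dif_pos h

lemma sTr_mul_self (i : ℕ) : sTr n i * sTr n i = 1 := by
  unfold sTr
  split_ifs <;> simp

lemma invCount_mul_sTr_le_add_one (w : Perm (Fin n)) (i : ℕ) :
    invCount (w * sTr n i) ≤ invCount w + 1 := by
  by_cases h : i + 1 < n
  · rw [sTr_eq h]
    exact invCount_mul_swap_le_add_one (Fin.mk_lt_mk.2 (by omega)) rfl
  · simp [sTr, h]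

lemma invCount_mul_sTr_of_lt {w : Perm (Fin n)} {i : ℕ} (h : i + 1 < n)
    (hw : w ⟨i, by omega⟩ < w ⟨i + 1, h⟩) : invCount (w * sTr n i) = invCount w + 1 :=
  (invCount_mul_sTr_le_add_one w i).antisymm
    (sTr_eq h ▸ invCount_add_one_le_mul_swap (Fin.mk_lt_mk.2 (by omega)) hw)

lemma invCount_mul_sTr_of_gt {w : Perm (Fin n)} {i : ℕ} (h : i + 1 < n)
    (hw : w ⟨i + 1, h⟩ < w ⟨i, by omega⟩) : invCount (w * sTr n i) + 1 = invCount w := by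
  have := invCount_mul_sTr_of_lt (w := w * sTr n i) h (by simpa [sTr_eq h] using hw)
  rwa [mul_assoc, sTr_mul_self, mul_one, eq_comm] at this

lemma invCount_one : invCount (1 : Perm (Fin n)) = 0 := by
  simp only [invCount, inversions, card_eq_zero, filter_eq_empty_iff]
  exact fun p _ h => h.1.asymm (by simpa using h.2)

lemma invCount_prod_le (l : List ℕ) : invCount (l.map (sTr n)).prod ≤ l.length := by
  induction l using List.reverseRecOn with
  | nil => simp [invCount_one]
  | append_singleton l i ih =>
    simpa using (invCount_mul_sTr_le_add_one _ i).trans (Nat.add_le_add_right ih 1)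

lemma exists_word_length_invCount (w : Perm (Fin n)) : ∃ l : List ℕ,
    l.length = invCount w ∧ (∀ i ∈ l, i + 1 < n) ∧ w = (l.map (sTr n)).prod := by
  induction hk : invCount w generalizing w with
  | zero =>
    rcases eq_or_ne w 1 with rfl | hw
    · exact ⟨[], rfl, by simp, rfl⟩
    obtain ⟨i, h, hi⟩ := exists_descent hw
    have := invCount_mul_sTr_of_gt h hi
    omega
  | succ k ih =>
    have hw : w ≠ 1 := by rintro rfl; simp [invCount_one] at hk
    obtain ⟨i, h, hi⟩ := exists_descent hw
    obtain ⟨l, hl, hli, hwl⟩ := ih (w * sTr n i) (by have := invCount_mul_sTr_of_gt h hi; omega)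
    refine ⟨l ++ [i], by simp [hl], by simpa [or_imp, forall_and] using ⟨hli, h⟩, ?_⟩
    simp [← hwl, mul_assoc, sTr_mul_self]

lemma len_eq_invCount (w : Perm (Fin n)) : len n w = invCount w := by
  obtain ⟨l, hl, hli, hwl⟩ := exists_word_length_invCount w
  have hmem : invCount w ∈ {k | ∃ l : List ℕ,
      l.length = k ∧ (∀ i ∈ l, i + 1 < n) ∧ w = (l.map (sTr n)).prod} :=
    ⟨l, hl, hli, hwl⟩
  refine (Nat.sInf_le hmem).antisymm ?_
  obtain ⟨l', hl', -, hwl'⟩ := Nat.sInf_mem ⟨_, hmem⟩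
  calc invCount w = invCount (l'.map (sTr n)).prod := by rw [← hwl']
    _ ≤ l'.length := invCount_prod_le l'
    _ = _ := hl'


lemma len_one : len n (1 : Perm (Fin n)) = 0 := by
  rw [len_eq_invCount, invCount_one]

lemma lt_len_mul_swap_iff {w : Perm (Fin n)} {a b : Fin n} (hab : a < b) :
    len n w < len n (w * swap a b) ↔ w a < w b := by
  simp only [len_eq_invCount]
  refine ⟨fun hlen => ?_, invCount_add_one_le_mul_swap hab⟩
  refine (lt_or_gt_of_ne (w.injective.ne hab.ne)).resolve_right fun hw => ?_
  have := invCount_add_one_le_mul_swap (w := w * swap a b) hab (by simpa using hw)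
  rw [mul_assoc, swap_mul_self, mul_one] at this
  omega

lemma len_mul_sTr_eq_add_one_iff {w : Perm (Fin n)} {i : ℕ} (h : i + 1 < n) :
    len n (w * sTr n i) = len n w + 1 ↔ w ⟨i, by omega⟩ < w ⟨i + 1, h⟩ := by
  refine ⟨fun hw => ?_, fun hw => by simp only [len_eq_invCount, invCount_mul_sTr_of_lt h hw]⟩
  rw [← lt_len_mul_swap_iff (Fin.mk_lt_mk.2 (by omega)), ← sTr_eq h]
  omega

lemma len_mul_sTr_cases (w : Perm (Fin n)) {i : ℕ} (h : i + 1 < n) :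
    len n (w * sTr n i) = len n w + 1 ∨ len n (w * sTr n i) + 1 = len n w := by
  simp only [len_eq_invCount]
  rcases lt_or_gt_of_ne (w.injective.ne (Fin.mk_lt_mk.2 (Nat.lt_succ_self i)).ne) with hw | hw
  · exact .inl (invCount_mul_sTr_of_lt h hw)
  · exact .inr (invCount_mul_sTr_of_gt h hw)

lemma len_mul_sTr_add_one_eq_iff {w : Perm (Fin n)} {i : ℕ} (h : i + 1 < n) :
    len n (w * sTr n i) + 1 = len n w ↔ w ⟨i + 1, h⟩ < w ⟨i, by omega⟩ := by
  rw [← not_iff_not, not_lt, le_iff_lt_or_eq, ← len_mul_sTr_eq_add_one_iff h,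
    w.injective.eq_iff, Fin.mk.injEq]
  have := len_mul_sTr_cases w h
  omega

lemma len_sTr {i : ℕ} (h : i + 1 < n) : len n (sTr n i) = 1 := by
  simpa [len_one] using (len_mul_sTr_eq_add_one_iff (w := 1) h).2 (Fin.mk_lt_mk.2 (by omega))

@[elab_as_elim]
lemma induction_on_ascent {P : Perm (Fin n) → Prop} (w : Perm (Fin n)) (one : P 1)
    (mul : ∀ v i, i + 1 < n → len n (v * sTr n i) = len n v + 1 → P v → P (v * sTr n i)) :
    P w := by
  induction hk : len n w using Nat.strong_induction_on generalizing w with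
  | _ k ih =>
  rcases eq_or_ne w 1 with rfl | hw
  · exact one
  obtain ⟨i, h, hi⟩ := exists_descent hw
  have hlen := (len_mul_sTr_add_one_eq_iff h).2 hi
  simpa [mul_assoc, sTr_mul_self] using
    mul (w * sTr n i) i h (by simp [mul_assoc, sTr_mul_self]; omega) (ih _ (by omega) _ rfl)

end Equiv.Perm

/-! ### The lifting property of the Bruhat order -/

namespace bruhatLT

variable {n : ℕ}

lemma len_lt {y z : Perm (Fin n)} (h : bruhatLT n y z) : len n y < len n z := by
  induction h with
  | single h => exact h.2
  | tail _ h ih => exact ih.trans h.2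

lemma trans {x y z : Perm (Fin n)} (hxy : bruhatLT n x y) (hyz : bruhatLT n y z) :
    bruhatLT n x z :=
  Relation.TransGen.trans hxy hyz

end bruhatLT

namespace Equiv.Perm

variable {n : ℕ}

lemma bruhatLT_mul_swap {w : Perm (Fin n)} {a b : Fin n} (hab : a < b) (hw : w a < w b) :
    bruhatLT n w (w * swap a b) :=
  .single ⟨⟨a, b, hab.ne, rfl⟩, (lt_len_mul_swap_iff hab).2 hw⟩

lemma bruhatLT_mul_sTr {w : Perm (Fin n)} {i : ℕ} (h : i + 1 < n)
    (hw : len n (w * sTr n i) = len n w + 1) : bruhatLT n w (w * sTr n i) :=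
  sTr_eq h ▸ bruhatLT_mul_swap (Fin.mk_lt_mk.2 (by omega)) ((len_mul_sTr_eq_add_one_iff h).1 hw)

lemma bruhatLT_mul_sTr_self {w : Perm (Fin n)} {i : ℕ} (h : i + 1 < n)
    (hw : len n (w * sTr n i) + 1 = len n w) : bruhatLT n (w * sTr n i) w := by
  simpa [mul_assoc, sTr_mul_self] using
    bruhatLT_mul_sTr (w := w * sTr n i) h (by simp [mul_assoc, sTr_mul_self]; omega)

lemma bruhatLT_mul_swap_mul {x s : Perm (Fin n)} {a b : Fin n} (hab : a ≠ b) (hs : s * s = 1)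
    (hx : len n (x * s) = len n x + 1) (hxt : len n x < len n (x * swap a b))
    (hxts : len n (x * swap a b * s) = len n (x * swap a b) + 1) :
    bruhatLT n (x * s) (x * swap a b * s) := by
  refine .single ⟨⟨s a, s b, s.injective.ne hab, ?_⟩, by omega⟩
  rw [swap_apply_apply, inv_eq_of_mul_eq_one_right hs]
  simp only [← mul_assoc]
  rw [mul_assoc x s s, hs, mul_one]

lemma mul_swap_adj_eq_or_bruhatLT {x : Perm (Fin n)} {p p' a b : Fin n} (hp : (p' : ℕ) = p + 1)
    (hab : a < b) (hx : x p < x p') (hxab : x a < x b)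
    (hdesc : (x * swap a b) p' < (x * swap a b) p) :
    x * swap p p' = x * swap a b ∨ bruhatLT n (x * swap p p') (x * swap a b) := by
  -- `swap a b` can turn the ascent of `x` at `p` into a descent only if `a = p` or `b = p'`; then
  -- `swap a b` is the conjugate by `swap p p'` of a transposition `t`, and
  -- `x * swap p p' < x * swap p p' * t < x * swap p p' * t * swap p p' = x * swap a b`.
  have hpp' : p < p' := Fin.lt_def.2 (by omega)
  rcases eq_or_ne a p with rfl | ha
  · rcases eq_or_ne b p' with rfl | hb
    · exact .inl rfl
    have hpb : p' < b := by simp only [Fin.lt_def, ne_eq, Fin.ext_iff] at *; omega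
    have e := swap_apply_apply (swap a p') p' b
    rw [swap_apply_right, swap_apply_of_ne_of_ne hab.ne' hb, swap_inv] at e
    simp only [Perm.mul_apply, swap_apply_left, swap_apply_of_ne_of_ne hpp'.ne' hpb.ne] at hdesc
    refine .inr (e ▸ (bruhatLT_mul_swap hpb ?_).trans (bruhatLT_mul_swap hpp' ?_))
    · simpa [swap_apply_of_ne_of_ne hab.ne' hb]
    · simpa [swap_apply_of_ne_of_ne hpp'.ne hab.ne, swap_apply_of_ne_of_ne hab.ne' hb]
  rcases eq_or_ne b p' with rfl | hb
  · have hap : a < p := by simp only [Fin.lt_def, ne_eq, Fin.ext_iff] at *; omega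
    have e := swap_apply_apply (swap p b) a p
    rw [swap_apply_of_ne_of_ne hap.ne hab.ne, swap_apply_left, swap_inv] at e
    simp only [Perm.mul_apply, swap_apply_right, swap_apply_of_ne_of_ne hap.ne' hpp'.ne]
      at hdesc
    refine .inr (e ▸ (bruhatLT_mul_swap hap ?_).trans (bruhatLT_mul_swap hpp' ?_))
    · simpa [swap_apply_of_ne_of_ne hap.ne hab.ne] using hdesc.trans hx
    · simpa [swap_apply_of_ne_of_ne hap.ne hab.ne, swap_apply_of_ne_of_ne hab.ne' hpp'.ne']
        using hdesc
  exfalso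
  rcases eq_or_ne a p' with rfl | ha'
  · simp [swap_apply_of_ne_of_ne hpp'.ne (hpp'.trans hab).ne] at hdesc
    exact (hdesc.trans hx |>.trans hxab).false
  rcases eq_or_ne b p with rfl | hb'
  · simp [swap_apply_of_ne_of_ne ha'.symm hpp'.ne'] at hdesc
    exact (hdesc.trans hxab |>.trans hx).false
  simp [swap_apply_of_ne_of_ne ha.symm hb'.symm, swap_apply_of_ne_of_ne ha'.symm hb.symm] at hdesc
  exact hdesc.asymm hx

lemma mul_sTr_eq_or_bruhatLT {x : Perm (Fin n)} {a b : Fin n} {i : ℕ} (h : i + 1 < n)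
    (hab : a ≠ b) (hx : len n (x * sTr n i) = len n x + 1) (hxt : len n x < len n (x * swap a b))
    (hdesc : len n (x * swap a b * sTr n i) + 1 = len n (x * swap a b)) :
    x * sTr n i = x * swap a b ∨ bruhatLT n (x * sTr n i) (x * swap a b) := by
  wlog hlt : a < b generalizing a b
  · simpa only [swap_comm] using this hab.symm (by rwa [swap_comm]) (by rwa [swap_comm])
      ((lt_or_gt_of_ne hab).resolve_left hlt)
  rw [sTr_eq h]
  exact mul_swap_adj_eq_or_bruhatLT rfl hlt ((len_mul_sTr_eq_add_one_iff h).1 hx)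
    ((lt_len_mul_swap_iff hlt).1 hxt) ((len_mul_sTr_add_one_eq_iff h).1 hdesc)

end Equiv.Perm

open Equiv.Perm

namespace bruhatLT

variable {n : ℕ}

theorem mul_sTr {x v : Perm (Fin n)} (hxv : bruhatLT n x v) {i : ℕ}
    (h : i + 1 < n) (hv : len n (v * sTr n i) = len n v + 1) :
    bruhatLT n (x * sTr n i) (v * sTr n i) := by
  have hvs := bruhatLT_mul_sTr h hv
  rcases len_mul_sTr_cases x h with hx | hx
  · induction hxv using Relation.TransGen.head_induction_on with
    | single hstep =>
      obtain ⟨⟨a, b, hab, rfl⟩, hlen⟩ := hstep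
      exact bruhatLT_mul_swap_mul hab (sTr_mul_self i) hx hlen hv
    | @head x _ hstep hrest ih =>
      obtain ⟨⟨a, b, hab, rfl⟩, hlen⟩ := hstep
      rcases len_mul_sTr_cases (x * swap a b) h with hx₁ | hx₁
      · exact (bruhatLT_mul_swap_mul hab (sTr_mul_self i) hx hlen hx₁).trans (ih hx₁)
      · rcases mul_sTr_eq_or_bruhatLT h hab hx hlen hx₁ with e | hlt
        · exact e ▸ hrest.trans hvs
        · exact hlt.trans (hrest.trans hvs)
  · exact (bruhatLT_mul_sTr_self h hx).trans (hxv.trans hvs)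

end bruhatLT

/-! ### Triangular maps -/

theorem Submodule.mem_span_image_iff_exists_sum_filter {ι R M : Type*} [Semiring R]
    [AddCommMonoid M] [Module R M] [Fintype ι] (v : ι → M) (p : ι → Prop) [DecidablePred p]
    {x : M} : x ∈ span R (v '' {i | p i}) ↔
      ∃ c : ι → R, x = ∑ i ∈ univ.filter p, c i • v i := by
  constructor
  · rw [Finsupp.mem_span_image_iff_linearCombination]
    rintro ⟨l, hl, rfl⟩
    refine ⟨l, ?_⟩
    rw [Finsupp.linearCombination_apply, Finsupp.sum_fintype _ _ (by simp)]
    exact (sum_filter_of_ne fun i _ hi =>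
      hl (Finsupp.mem_support_iff.2 (left_ne_zero_of_smul hi))).symm
  · rintro ⟨c, rfl⟩
    exact sum_mem fun i hi => smul_mem _ _ (subset_span ⟨i, (mem_filter.1 hi).2, rfl⟩)

theorem Submodule.sub_mem_span_image_iff_exists_sum_filter {ι R M : Type*} [Ring R]
    [AddCommGroup M] [Module R M] [Fintype ι] (v : ι → M) (p : ι → Prop) [DecidablePred p]
    {x y : M} : x - y ∈ span R (v '' {i | p i}) ↔
      ∃ c : ι → R, x = y + ∑ i ∈ univ.filter p, c i • v i := by
  simp only [mem_span_image_iff_exists_sum_filter, sub_eq_iff_eq_add']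

lemma neg_one_pow_eq_of_mod_two_eq {R : Type*} [Ring R] {a b : ℕ}
    (h : a % 2 = b % 2) : (-1 : R) ^ a = (-1) ^ b := by
  rw [neg_one_pow_eq_pow_mod_two, h, ← neg_one_pow_eq_pow_mod_two]

lemma isUnit_neg_one_pow_sub_neg_one_pow {R : Type*} [Ring R] (h2 : IsUnit (2 : R)) {a b : ℕ}
    (h : ¬ a % 2 = b % 2) : IsUnit ((-1 : R) ^ a - (-1) ^ b) := by
  rw [neg_one_pow_eq_pow_mod_two, neg_one_pow_eq_pow_mod_two (n := b)]
  rcases Nat.mod_two_eq_zero_or_one a with ha | ha <;>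
    rcases Nat.mod_two_eq_zero_or_one b with hb | hb
  · omega
  · rw [ha, hb, pow_zero, pow_one, sub_neg_eq_add, one_add_one_eq_two]
    exact h2
  · rw [ha, hb, pow_one, pow_zero, ← neg_add', one_add_one_eq_two]
    exact h2.neg
  · omega

namespace Module.Basis

variable {ι R M : Type*} [CommRing R] [AddCommGroup M] [Module R M]

theorem linearIndependent_of_top_le_span [Finite ι] (b : Basis ι R M) {v : ι → M}
    (hv : ⊤ ≤ span R (Set.range v)) : LinearIndependent R v := by
  have : Module.Finite R M := .of_basis b
  have hsurj : Function.Surjective (b.constr R v) := by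
    rw [← LinearMap.range_eq_top, constr_range, eq_top_iff]
    exact hv
  have hinj := OrzechProperty.injective_of_surjective_endomorphism _ hsurj
  simpa [Function.comp_def] using b.linearIndependent.map' _ (LinearMap.ker_eq_bot.2 hinj)

theorem top_le_span_of_sub_mem_span (b : Basis ι R M) {ℓ : ι → ℕ} {v : ι → M}
    (hv : ∀ z, v z - b z ∈ span R (b '' {y | ℓ y < ℓ z})) :
    ⊤ ≤ span R (Set.range v) := by
  rw [← b.span_eq, span_le]
  rintro _ ⟨z, rfl⟩
  induction hk : ℓ z using Nat.strong_induction_on generalizing z with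
  | _ k ih =>
  have hlow : span R (b '' {y | ℓ y < ℓ z}) ≤ span R (Set.range v) := by
    rw [span_le]
    rintro _ ⟨y, hy, rfl⟩
    exact ih _ (hk ▸ hy) y rfl
  simpa using sub_mem (subset_span (Set.mem_range_self z)) (hlow (hv z))

lemma repr_eq_zero_of_mem_span_image (b : Basis ι R M) {s : Set ι} {x : M}
    (hx : x ∈ span R (b '' s)) {i : ι} (hi : i ∉ s) : b.repr x i = 0 :=
  Finsupp.notMem_support_iff.1 fun h => hi (b.mem_span_image.1 hx h)

def IsTriangular (b : Basis ι R M) (r : ι → ι → Prop) (ε : ι → R) (φ : Module.End R M) :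
    Prop :=
  ∀ z, φ (b z) - ε z • b z ∈ span R (b '' {y | r y z})

section Triangular

variable {b : Basis ι R M} {ε : ι → R} {φ : Module.End R M} {ℓ : ι → ℕ}

lemma IsTriangular.mono {r r' : ι → ι → Prop} (h : b.IsTriangular r ε φ)
    (hr : ∀ y z, r y z → r' y z) : b.IsTriangular r' ε φ :=
  fun z => span_mono (Set.image_mono fun y => hr y z) (h z)

lemma IsTriangular.repr_map_eq_mul (hφ : b.IsTriangular (fun y z => ℓ y < ℓ z) ε φ)
    {y₀ : ι} {x : M} (hx : x ∈ span R (b '' {y | ℓ y ≤ ℓ y₀})) :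
    b.repr (φ x) y₀ = ε y₀ * b.repr x y₀ := by
  induction hx using Submodule.span_induction with
  | mem _ hy =>
    obtain ⟨y, hy, rfl⟩ := hy
    have h := b.repr_eq_zero_of_mem_span_image (hφ y) (i := y₀) (by simpa using hy)
    rw [map_sub, Finsupp.sub_apply, sub_eq_zero] at h
    rw [h, map_smul, repr_self, Finsupp.smul_apply, Finsupp.single_apply]
    split_ifs with hyy <;> simp [hyy]
  | zero => simp
  | add x y _ _ hx hy => simp [hx, hy, mul_add]
  | smul a x _ hx => simp [hx, mul_left_comm]

/-- Compare the coefficients of `x` and of `φ x = μ • x` at a basis vector of maximal `ℓ` in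
the support of `x`. -/
theorem IsTriangular.disjoint_eigenspace
    (hφ : b.IsTriangular (fun y z => ℓ y < ℓ z) ε φ) {μ : R} {s : Set ι}
    (hs : ∀ y ∈ s, IsUnit (ε y - μ)) : Disjoint (φ.eigenspace μ) (span R (b '' s)) := by
  rw [Submodule.disjoint_def]
  intro x hx hxs
  by_contra hne
  obtain ⟨y₀, hy₀, hmax⟩ := (b.repr x).support.exists_max_image ℓ
    (Finsupp.support_nonempty_iff.2 (b.repr.map_ne_zero_iff.2 hne))
  have h := hφ.repr_map_eq_mul (b.mem_span_image.2 fun y hy => hmax y hy)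
  rw [Module.End.mem_eigenspace_iff.1 hx, map_smul, Finsupp.smul_apply, smul_eq_mul,
    ← sub_eq_zero, ← sub_mul, ← neg_sub, neg_mul, neg_eq_zero] at h
  exact Finsupp.mem_support_iff.1 hy₀
    ((hs y₀ (b.mem_span_image.1 hxs hy₀)).mul_right_eq_zero.1 h)

/-- `½ (b z + ε φ (b z))` is an `ε`-eigenvector congruent to `b z` modulo the `b y` with
`lt y z`; by induction, those `b y` of the parity of `z` are in turn eigenvectors up to terms of
the other parity. -/
theorem IsTriangular.mem_eigenspace_sup_span {lt : ι → ι → Prop}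
    (hφ : b.IsTriangular lt (fun y => (-1) ^ ℓ y) φ) (hlt : ∀ y z, lt y z → ℓ y < ℓ z)
    (htrans : ∀ x y z, lt x y → lt y z → lt x z) (hinv : ∀ x, φ (φ x) = x)
    (h2 : IsUnit (2 : R)) (z : ι) :
    b z ∈ φ.eigenspace ((-1) ^ ℓ z) ⊔
      span R (b '' {y | lt y z ∧ ¬ ℓ y % 2 = ℓ z % 2}) := by
  induction hk : ℓ z using Nat.strong_induction_on generalizing z with
  | _ k ih =>
  subst hk
  obtain ⟨ε, hε, hεε⟩ : ∃ ε : R, (-1) ^ ℓ z = ε ∧ ε * ε = 1 :=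
    ⟨_, rfl, by rw [← pow_add, ← two_mul, pow_mul, neg_one_sq, one_pow]⟩
  rw [hε]
  have h2inv : Ring.inverse (2 : R) * 2 = 1 := Ring.inverse_mul_cancel _ h2
  set A := Ring.inverse (2 : R) • (b z + ε • φ (b z))
  have hA : A ∈ φ.eigenspace ε := by
    rw [Module.End.mem_eigenspace_iff]
    simp only [A, map_smul, map_add, hinv]
    linear_combination (norm := module) -(Ring.inverse (2 : R) • hεε • φ (b z))
  have hrest : b z - A = (-(Ring.inverse (2 : R) * ε)) • (φ (b z) - ε • b z) := by
    simp only [A]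
    linear_combination (norm := module) -(h2inv • b z) - Ring.inverse (2 : R) • hεε • b z
  have hlow : span R (b '' {y | lt y z}) ≤
      φ.eigenspace ε ⊔ span R (b '' {y | lt y z ∧ ¬ ℓ y % 2 = ℓ z % 2}) := by
    rw [span_le]
    rintro _ ⟨y, hy, rfl⟩
    by_cases hpar : ℓ y % 2 = ℓ z % 2
    · have hy' := ih _ (hlt y z hy) y rfl
      rw [neg_one_pow_eq_of_mod_two_eq hpar, hε] at hy'
      have hmono : span R (b '' {x | lt x y ∧ ¬ ℓ x % 2 = ℓ y % 2}) ≤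
          span R (b '' {x | lt x z ∧ ¬ ℓ x % 2 = ℓ z % 2}) :=
        span_mono (Set.image_mono fun x hx => ⟨htrans x y z hx.1 hy, hpar ▸ hx.2⟩)
      exact sup_le_sup_left hmono _ hy'
    · exact mem_sup_right (subset_span ⟨y, ⟨hy, hpar⟩, rfl⟩)
  have hφz : φ (b z) - ε • b z ∈ span R (b '' {y | lt y z}) := hε ▸ hφ z
  have := add_mem (mem_sup_left hA) (hlow (hrest ▸ smul_mem _ _ hφz))
  rwa [add_sub_cancel] at this

theorem IsTriangular.existsUnique_eigenvector {lt : ι → ι → Prop}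
    (hφ : b.IsTriangular lt (fun y => (-1) ^ ℓ y) φ) (hlt : ∀ y z, lt y z → ℓ y < ℓ z)
    (htrans : ∀ x y z, lt x y → lt y z → lt x z) (hinv : ∀ x, φ (φ x) = x)
    (h2 : IsUnit (2 : R)) (z : ι) :
    ∃! B : M, φ B = (-1 : R) ^ ℓ z • B ∧
      B - b z ∈ span R (b '' {y | lt y z ∧ ¬ ℓ y % 2 = ℓ z % 2}) := by
  obtain ⟨e, he, o, ho, heo⟩ := mem_sup.1 (hφ.mem_eigenspace_sup_span hlt htrans hinv h2 z)
  have hez : e - b z ∈ span R (b '' {y | lt y z ∧ ¬ ℓ y % 2 = ℓ z % 2}) := by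
    simpa [← heo] using neg_mem ho
  refine ⟨e, ⟨Module.End.mem_eigenspace_iff.1 he, hez⟩, fun B ⟨hB, hBz⟩ => ?_⟩
  have hdisj := (hφ.mono hlt).disjoint_eigenspace (μ := (-1) ^ ℓ z)
    (s := {y | lt y z ∧ ¬ ℓ y % 2 = ℓ z % 2})
    fun y hy => isUnit_neg_one_pow_sub_neg_one_pow h2 hy.2
  rw [← sub_eq_zero]
  refine disjoint_def.1 hdisj _ (sub_mem (Module.End.mem_eigenspace_iff.2 hB) he) ?_
  simpa using sub_mem hBz hez

end Triangular

theorem eigenspace_eq_span_image (b : Basis ι R M) {φ : Module.End R M} {ε : ι → R}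
    (hφ : ∀ i, φ (b i) = ε i • b i) {μ : R}
    {s : Set ι} (hs : ∀ i ∈ s, ε i = μ) (hs' : ∀ i ∉ s, IsUnit (ε i - μ)) :
    φ.eigenspace μ = span R (b '' s) := by
  have hle : span R (b '' s) ≤ φ.eigenspace μ := by
    rw [span_le]
    rintro _ ⟨i, hi, rfl⟩
    exact Module.End.mem_eigenspace_iff.2 (by rw [hφ, hs i hi])
  -- a diagonal map is triangular for the constant grading
  have hdisj : Disjoint (φ.eigenspace μ) (span R (b '' sᶜ)) :=
    IsTriangular.disjoint_eigenspace (ℓ := fun _ => 0) (fun z => by simp [hφ z]) hs'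
  refine le_antisymm (fun x hx => ?_) hle
  have hsup : x ∈ span R (b '' s) ⊔ span R (b '' sᶜ) := by
    rw [← span_union, ← Set.image_union, Set.union_compl_self, Set.image_univ, b.span_eq]
    trivial
  obtain ⟨u, hu, u', hu', rfl⟩ := mem_sup.1 hsup
  have hu'E : u' ∈ φ.eigenspace μ := by simpa using sub_mem hx (hle hu)
  rwa [Submodule.disjoint_def.1 hdisj u' hu'E hu', add_zero]

theorem eigenspace_one_eq_span_even (b : Basis ι R M) {φ : Module.End R M} {ℓ : ι → ℕ}
    (h2 : IsUnit (2 : R))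
    (hφ : ∀ i, φ (b i) = (-1 : R) ^ ℓ i • b i) :
    φ.eigenspace 1 = span R (b '' {i | Even (ℓ i)}) :=
  b.eigenspace_eq_span_image hφ (fun i hi => hi.neg_one_pow) fun i hi => by
    rw [(Nat.not_even_iff_odd.1 hi).neg_one_pow, show (-1 : R) - 1 = -2 by ring]
    exact h2.neg

theorem eigenspace_neg_one_eq_span_odd (b : Basis ι R M) {φ : Module.End R M} {ℓ : ι → ℕ}
    (h2 : IsUnit (2 : R))
    (hφ : ∀ i, φ (b i) = (-1 : R) ^ ℓ i • b i) :
    φ.eigenspace (-1) = span R (b '' {i | ¬ Even (ℓ i)}) :=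
  b.eigenspace_eq_span_image hφ (fun i hi => (Nat.not_even_iff_odd.1 hi).neg_one_pow)
    fun i hi => by
      rw [(not_not.1 hi).neg_one_pow, sub_neg_eq_add, one_add_one_eq_two]
      exact h2

end Module.Basis

/-! ### The hash involution -/

structure HeckeRelations {R H : Type*} [CommRing R] [Ring H] [Algebra R H] (n : ℕ) (q : R)
    (T : Perm (Fin n) → H) : Prop where
  one : T 1 = 1
  mul_of_lt : ∀ w i, i + 1 < n → len n (w * sTr n i) = len n w + 1 →
    T w * T (sTr n i) = T (w * sTr n i)
  mul_of_gt : ∀ w i, i + 1 < n → len n (w * sTr n i) + 1 = len n w →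
    T w * T (sTr n i) = T (w * sTr n i) + (q - Ring.inverse q) • T w

namespace HeckeRelations

variable {R H : Type*} [CommRing R] [Ring H] [Algebra R H] {n : ℕ} {q : R}
  {T : Perm (Fin n) → H}

lemma inverse_T_sTr (hT : HeckeRelations n q T) {i : ℕ} (h : i + 1 < n) :
    Ring.inverse (T (sTr n i)) = T (sTr n i) - (q - Ring.inverse q) • 1 := by
  have hsq := hT.mul_of_gt (sTr n i) i h (by rw [sTr_mul_self, len_one, len_sTr h])
  rw [sTr_mul_self, hT.one] at hsq
  refine Ring.inverse_unit ⟨_, _, ?_, ?_⟩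
  · rw [mul_sub, hsq, mul_smul_comm, mul_one, add_sub_cancel_right]
  · rw [sub_mul, hsq, smul_mul_assoc, one_mul, add_sub_cancel_right]

lemma hash_T_sTr (hT : HeckeRelations n q T) {hash : H ≃ₐ[R] H}
    (hhash : ∀ w, hash (T w) = ((-1 : R) ^ len n w) • Ring.inverse (T w⁻¹)) {i : ℕ}
    (h : i + 1 < n) : hash (T (sTr n i)) = (q - Ring.inverse q) • 1 - T (sTr n i) := by
  rw [hhash, inv_eq_of_mul_eq_one_right (sTr_mul_self i), len_sTr h, hT.inverse_T_sTr h,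
    pow_one, neg_one_smul, neg_sub]

lemma map_T_eq_self (hT : HeckeRelations n q T) {f : H →ₐ[R] H}
    (hf : ∀ i, i + 1 < n → f (T (sTr n i)) = T (sTr n i)) (w : Perm (Fin n)) :
    f (T w) = T w := by
  induction w using induction_on_ascent with
  | one => rw [hT.one, map_one]
  | mul v i h hv ih => rw [← hT.mul_of_lt v i h hv, map_mul, ih, hf i h]

lemma mul_T_sTr_mem_span (hT : HeckeRelations n q T) {v : Perm (Fin n)} {i : ℕ}
    (h : i + 1 < n) (hv : len n (v * sTr n i) = len n v + 1) {x : H}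
    (hx : x ∈ span R (T '' {y | bruhatLT n y v})) :
    x * T (sTr n i) ∈ span R (T '' {y | bruhatLT n y (v * sTr n i)}) := by
  induction hx using Submodule.span_induction with
  | mem _ hy =>
    obtain ⟨y, hy, rfl⟩ := hy
    have hys : bruhatLT n (y * sTr n i) (v * sTr n i) := hy.mul_sTr h hv
    rcases len_mul_sTr_cases y h with hy' | hy'
    · rw [hT.mul_of_lt y i h hy']
      exact subset_span ⟨_, hys, rfl⟩
    · rw [hT.mul_of_gt y i h hy']
      exact add_mem (subset_span ⟨_, hys, rfl⟩)
        (smul_mem _ _ (subset_span ⟨y, hy.trans (bruhatLT_mul_sTr h hv), rfl⟩))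
  | zero => simp
  | add x y _ _ hx hy => simpa [add_mul] using add_mem hx hy
  | smul a x _ hx => simpa [smul_mul_assoc] using smul_mem _ a hx

theorem hash_T_sub_mem_span (hT : HeckeRelations n q T) {hash : H ≃ₐ[R] H}
    (hs : ∀ i, i + 1 < n → hash (T (sTr n i)) = (q - Ring.inverse q) • 1 - T (sTr n i))
    (w : Perm (Fin n)) :
    hash (T w) - ((-1 : R) ^ len n w) • T w ∈ span R (T '' {y | bruhatLT n y w}) := by
  induction w using induction_on_ascent with
  | one => simp [hT.one, len_one]
  | mul v i h hv ih =>
    set ξ := q - Ring.inverse q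
    set ε : R := (-1) ^ len n v
    obtain ⟨d, hTv, ih⟩ : ∃ d, hash (T v) = ε • T v + d ∧
        d ∈ span R (T '' {y | bruhatLT n y v}) :=
      ⟨_, (add_sub_cancel _ _).symm, ih⟩
    have hvs : bruhatLT n v (v * sTr n i) := bruhatLT_mul_sTr h hv
    have hd : d ∈ span R (T '' {y | bruhatLT n y (v * sTr n i)}) :=
      span_mono (Set.image_mono fun y hy => bruhatLT.trans hy hvs) ih
    have e : hash (T (v * sTr n i)) - ((-1 : R) ^ len n (v * sTr n i)) • T (v * sTr n i) =
        (ξ * ε) • T v + ξ • d - d * T (sTr n i) := by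
      rw [← hT.mul_of_lt v i h hv, map_mul, hs i h, hv, pow_succ, hTv]
      simp only [mul_sub, add_mul, smul_mul_assoc, mul_smul_comm, mul_one]
      module
    rw [e]
    exact sub_mem (add_mem (smul_mem _ _ (subset_span ⟨v, hvs, rfl⟩)) (smul_mem _ _ hd))
      (hT.mul_T_sTr_mem_span h hv ih)

lemma hash_hash (hT : HeckeRelations n q T) {hash : H ≃ₐ[R] H}
    (hs : ∀ i, i + 1 < n → hash (T (sTr n i)) = (q - Ring.inverse q) • 1 - T (sTr n i))
    {bT : Module.Basis (Perm (Fin n)) R H} (hbT : ⇑bT = T) (x : H) : hash (hash x) = x := by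
  have hT' := hT.map_T_eq_self (f := hash.toAlgHom.comp hash.toAlgHom) fun i h => by
    simp [hs i h]
  have : (hash.toAlgHom.comp hash.toAlgHom).toLinearMap = LinearMap.id :=
    bT.ext fun w => by simpa [hbT] using hT' w
  exact LinearMap.congr_fun this x

lemma isTriangular_hash (hT : HeckeRelations n q T) {hash : H ≃ₐ[R] H}
    (hs : ∀ i, i + 1 < n → hash (T (sTr n i)) = (q - Ring.inverse q) • 1 - T (sTr n i))
    {bT : Module.Basis (Perm (Fin n)) R H} (hbT : ⇑bT = T) :
    bT.IsTriangular (bruhatLT n) (fun w => (-1) ^ len n w) hash.toLinearMap :=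
  fun w => by simpa [hbT] using hT.hash_T_sub_mem_span hs w

end HeckeRelations

lemma fixedSubmodule_eq_eigenspace {R H : Type*} [CommRing R] [Ring H] [Algebra R H]
    (φ : H ≃ₐ[R] H) (ε : R) :
    fixedSubmodule φ ε = Module.End.eigenspace φ.toLinearMap ε := by
  ext x
  simp [fixedSubmodule]

theorem Belt_exists_unique_and_basis_general
    {R : Type*} [CommRing R] (q : R) (h2 : IsUnit (2 : R))
    (n : ℕ) {H : Type*} [Ring H] [Algebra R H]
    -- the Iwahori–Hecke algebra of type A with its basis of standard elements T_w
    (T : Equiv.Perm (Fin n) → H)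
    (bT : Module.Basis (Equiv.Perm (Fin n)) R H) (hbT : ∀ w, bT w = T w)
    (hT1 : T 1 = 1)
    (hmul1 : ∀ (w : Equiv.Perm (Fin n)) (i : ℕ), i + 1 < n →
      len n (w * sTr n i) = len n w + 1 → T w * T (sTr n i) = T (w * sTr n i))
    (hmul2 : ∀ (w : Equiv.Perm (Fin n)) (i : ℕ), i + 1 < n →
      len n (w * sTr n i) + 1 = len n w →
      T w * T (sTr n i) = T (w * sTr n i) + (q - Ring.inverse q) • T w)
    -- the hash involution
    (hash : H ≃ₐ[R] H)
    (hhash : ∀ w, hash (T w) = ((-1 : R) ^ len n w) • Ring.inverse (T w⁻¹))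
    :
    -- (a): existence and uniqueness of B_z
    (∀ z : Equiv.Perm (Fin n), ∃! Bz : H,
        hash Bz = ((-1 : R) ^ len n z) • Bz ∧
        ∃ b : Equiv.Perm (Fin n) → R,
          Bz = T z + ∑ y ∈ Finset.univ.filter (fun y => precLT n y z), b y • T y) ∧
    -- (b) and (c): for any family B of such elements, we get bases of H⁺ and of H⁻
    ∀ B : Equiv.Perm (Fin n) → H,
      (∀ z, hash (B z) = ((-1 : R) ^ len n z) • B z ∧
        ∃ b : Equiv.Perm (Fin n) → R,
          B z = T z + ∑ y ∈ Finset.univ.filter (fun y => precLT n y z), b y • T y) →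
      ((LinearIndependent R
          (fun z : {z : Equiv.Perm (Fin n) // Even (len n z)} => B z.val) ∧
        Submodule.span R
            (Set.range fun z : {z : Equiv.Perm (Fin n) // Even (len n z)} => B z.val)
          = fixedSubmodule hash 1) ∧
       (LinearIndependent R
          (fun z : {z : Equiv.Perm (Fin n) // ¬ Even (len n z)} => B z.val) ∧
        Submodule.span R
            (Set.range fun z : {z : Equiv.Perm (Fin n) // ¬ Even (len n z)} => B z.val)
          = fixedSubmodule hash (-1))) := by
  have hT : HeckeRelations n q T := ⟨hT1, hmul1, hmul2⟩
  have hbT' : ⇑bT = T := funext hbT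
  have hs := fun i (h : i + 1 < n) => hT.hash_T_sTr hhash h
  have htri := hT.isTriangular_hash hs hbT'
  simp only [← Submodule.sub_mem_span_image_iff_exists_sum_filter]
  refine ⟨fun z => ?_, fun B hB => ?_⟩
  · have := htri.existsUnique_eigenvector (fun _ _ => bruhatLT.len_lt)
      (fun _ _ _ => bruhatLT.trans) (hT.hash_hash hs hbT') h2 z
    rw [hbT'] at this
    exact this
  · have hspan := bT.top_le_span_of_sub_mem_span (ℓ := len n) (v := B) fun z =>
      span_mono (Set.image_mono fun y hy => hy.1.len_lt) (hbT' ▸ (hB z).2)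
    have hLI := bT.linearIndependent_of_top_le_span hspan
    set B' := Module.Basis.mk hLI hspan
    have hB' : ∀ z, hash.toLinearMap (B' z) = (-1 : R) ^ len n z • B' z := by
      simpa [B'] using fun z => (hB z).1
    rw [fixedSubmodule_eq_eigenspace, fixedSubmodule_eq_eigenspace,
      B'.eigenspace_one_eq_span_even h2 hB', B'.eigenspace_neg_one_eq_span_odd h2 hB',
      Module.Basis.coe_mk, Set.image_eq_range, Set.image_eq_range]
    exact ⟨⟨hLI.comp _ Subtype.val_injective, rfl⟩,
      ⟨hLI.comp _ Subtype.val_injective, rfl⟩⟩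

/-- Proposition `BBasis`: (a) for each `z ∈ 𝔖ₙ` there is a unique
`B_z ∈ H^{ε_z}` of the form `B_z = T_z + ∑_{y ≺ z} b_{yz} T_y`; (b) `{B_z : z ∈ 𝔄ₙ}`
is an `R`-basis of `𝒜ₙ(q) = H⁺`; (c) `{B_z : z ∈ 𝔖ₙ ∖ 𝔄ₙ}` is an `R`-basis of `H⁻`. -/
theorem Belt_exists_unique_and_basis
    {R : Type*} [CommRing R] (q : R) (hq : IsUnit q) (hq1 : q ≠ 1) (h2 : IsUnit (2 : R))
    (n : ℕ) {H : Type*} [Ring H] [Algebra R H]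
    -- the Iwahori–Hecke algebra of type A with its basis of standard elements T_w
    (T : Equiv.Perm (Fin n) → H)
    (bT : Module.Basis (Equiv.Perm (Fin n)) R H) (hbT : ∀ w, bT w = T w)
    (hT1 : T 1 = 1)
    (hTunit : ∀ w, IsUnit (T w))
    (hmul1 : ∀ (w : Equiv.Perm (Fin n)) (i : ℕ), i + 1 < n →
      len n (w * sTr n i) = len n w + 1 → T w * T (sTr n i) = T (w * sTr n i))
    (hmul2 : ∀ (w : Equiv.Perm (Fin n)) (i : ℕ), i + 1 < n →
      len n (w * sTr n i) + 1 = len n w →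
      T w * T (sTr n i) = T (w * sTr n i) + (q - Ring.inverse q) • T w)
    -- the hash involution
    (hash : H ≃ₐ[R] H)
    (hhash : ∀ w, hash (T w) = ((-1 : R) ^ len n w) • Ring.inverse (T w⁻¹))
    :
    -- (a): existence and uniqueness of B_z
    (∀ z : Equiv.Perm (Fin n), ∃! Bz : H,
        hash Bz = ((-1 : R) ^ len n z) • Bz ∧
        ∃ b : Equiv.Perm (Fin n) → R,
          Bz = T z + ∑ y ∈ Finset.univ.filter (fun y => precLT n y z), b y • T y) ∧
    -- (b) and (c): for any family B of such elements, we get bases of H⁺ and of H⁻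
    ∀ B : Equiv.Perm (Fin n) → H,
      (∀ z, hash (B z) = ((-1 : R) ^ len n z) • B z ∧
        ∃ b : Equiv.Perm (Fin n) → R,
          B z = T z + ∑ y ∈ Finset.univ.filter (fun y => precLT n y z), b y • T y) →
      ((LinearIndependent R
          (fun z : {z : Equiv.Perm (Fin n) // Even (len n z)} => B z.val) ∧
        Submodule.span R
            (Set.range fun z : {z : Equiv.Perm (Fin n) // Even (len n z)} => B z.val)
          = fixedSubmodule hash 1) ∧
       (LinearIndependent R
          (fun z : {z : Equiv.Perm (Fin n) // ¬ Even (len n z)} => B z.val) ∧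
        Submodule.span R
            (Set.range fun z : {z : Equiv.Perm (Fin n) // ¬ Even (len n z)} => B z.val)
          = fixedSubmodule hash (-1))) :=
  Belt_exists_unique_and_basis_general q h2 n T bT hbT hT1 hmul1 hmul2 hash hhash

end
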